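/- For each m ≥ 1 there is a satisfiable flat CTL formula φ_m over operators {AX} of length O(m) all of whose serial models have at least m + 1 worlds. Concretely, φ_m := AX σ(p₁,…,p_m) ∧ ⋀_{i=1}^m EX pᵢ, where σ(p₁,…,p_m) is a propositional formula of length O(m) asserting that at most one of p₁,…,p_m holds, is satisfiable and every rooted serial model of φ_m has size at least m + 1. -/
import Mathlib


def Serial {W : Type} (R : W → W → Prop) : Prop := ∀ w, ∃ u, R w u

def IsPath {W : Type} (R : W → W → Prop) (π : ℕ → W) : Prop := ∀ i, R (π i) (π (i+1))

structure Kripke (W : Type) where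
  R : W → W → Prop
  V : ℕ → W → Prop

inductive CTL where
  | atom : ℕ → CTL
  | neg  : CTL → CTL
  | and  : CTL → CTL → CTL
  | or   : CTL → CTL → CTL
  | AX : CTL → CTL
  | EX : CTL → CTL
  | AF : CTL → CTL
  | EF : CTL → CTL
  | AG : CTL → CTL
  | EG : CTL → CTL
  | AU : CTL → CTL → CTL
  | EU : CTL → CTL → CTL
  | AR : CTL → CTL → CTL
  | ER : CTL → CTL → CTL
deriving DecidableEq

def sat {W : Type} (K : Kripke W) : CTL → W → Prop
  | .atom p, w => K.V p w
  | .neg φ, w => ¬ sat K φ w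
  | .and φ ψ, w => sat K φ w ∧ sat K ψ w
  | .or φ ψ, w => sat K φ w ∨ sat K ψ w
  | .AX φ, w => ∀ π : ℕ → W, IsPath K.R π → π 0 = w → sat K φ (π 1)
  | .EX φ, w => ∃ π : ℕ → W, IsPath K.R π ∧ π 0 = w ∧ sat K φ (π 1)
  | .AF φ, w => ∀ π : ℕ → W, IsPath K.R π → π 0 = w → ∃ i, sat K φ (π i)
  | .EF φ, w => ∃ π : ℕ → W, IsPath K.R π ∧ π 0 = w ∧ ∃ i, sat K φ (π i)
  | .AG φ, w => ∀ π : ℕ → W, IsPath K.R π → π 0 = w → ∀ i, sat K φ (π i)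
  | .EG φ, w => ∃ π : ℕ → W, IsPath K.R π ∧ π 0 = w ∧ ∀ i, sat K φ (π i)
  | .AU φ ψ, w => ∀ π : ℕ → W, IsPath K.R π → π 0 = w →
      ∃ i, sat K ψ (π i) ∧ ∀ j, j < i → sat K φ (π j)
  | .EU φ ψ, w => ∃ π : ℕ → W, IsPath K.R π ∧ π 0 = w ∧
      ∃ i, sat K ψ (π i) ∧ ∀ j, j < i → sat K φ (π j)
  | .AR φ ψ, w => ∀ π : ℕ → W, IsPath K.R π → π 0 = w →
      ∀ i, sat K ψ (π i) ∨ ∃ j, j < i ∧ sat K φ (π j)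
  | .ER φ ψ, w => ∃ π : ℕ → W, IsPath K.R π ∧ π 0 = w ∧
      ∀ i, sat K ψ (π i) ∨ ∃ j, j < i ∧ sat K φ (π j)

def CTL.len : CTL → ℕ
  | .atom _ => 1
  | .neg φ => φ.len + 1
  | .and φ ψ => φ.len + ψ.len + 1
  | .or φ ψ => φ.len + ψ.len + 1
  | .AX φ => φ.len + 1
  | .EX φ => φ.len + 1
  | .AF φ => φ.len + 1
  | .EF φ => φ.len + 1
  | .AG φ => φ.len + 1
  | .EG φ => φ.len + 1
  | .AU φ ψ => φ.len + ψ.len + 1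
  | .EU φ ψ => φ.len + ψ.len + 1
  | .AR φ ψ => φ.len + ψ.len + 1
  | .ER φ ψ => φ.len + ψ.len + 1

def CTL.td : CTL → ℕ
  | .atom _ => 0
  | .neg φ => φ.td
  | .and φ ψ => max φ.td ψ.td
  | .or φ ψ => max φ.td ψ.td
  | .AX φ => φ.td + 1
  | .EX φ => φ.td + 1
  | .AF φ => φ.td + 1
  | .EF φ => φ.td + 1
  | .AG φ => φ.td + 1
  | .EG φ => φ.td + 1
  | .AU φ ψ => max φ.td ψ.td + 1
  | .EU φ ψ => max φ.td ψ.td + 1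
  | .AR φ ψ => max φ.td ψ.td + 1
  | .ER φ ψ => max φ.td ψ.td + 1

/-- The formula uses only the temporal operators `AX` and its dual `EX`. -/
def OnlyAX : CTL → Prop
  | .atom _ => True
  | .neg φ => OnlyAX φ
  | .and φ ψ => OnlyAX φ ∧ OnlyAX ψ
  | .or φ ψ => OnlyAX φ ∧ OnlyAX ψ
  | .AX φ => OnlyAX φ
  | .EX φ => OnlyAX φ
  | _ => False

namespace FlatAX

/-- `a → b` as a CTL formula. -/
def impC (a b : CTL) : CTL := .or (.neg a) b

/-- Constraints for index `i ≥ 1`: `pᵢ → cᵢ`, `cᵢ₋₁ → cᵢ`, `pᵢ → ¬cᵢ₋₁`,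
where `pᵢ = atom i` and `cⱼ = atom (m+1+j)`. -/
def unitC (m i : ℕ) : CTL :=
  .and (impC (.atom i) (.atom (m+1+i)))
    (.and (impC (.atom (m+i)) (.atom (m+1+i)))
      (impC (.atom i) (.neg (.atom (m+i)))))

/-- Conjunction of `unitC m i` for `i = 1..k` (with a tautology as base). -/
def sig (m : ℕ) : ℕ → CTL
  | 0 => .or (.atom (m+1)) (.neg (.atom (m+1)))
  | k+1 => .and (sig m k) (unitC m (k+1))

/-- Conjunction of `EX pᵢ` for `i = 1..k` (with `atom 0` as base). -/
def exs : ℕ → CTL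
  | 0 => .atom 0
  | k+1 => .and (exs k) (.EX (.atom (k+1)))

def phi (m : ℕ) : CTL :=
  .and (.and (.atom 0) (.AX (.and (.neg (.atom 0)) (sig m m)))) (exs m)

lemma onlyAX_sig (m k : ℕ) : OnlyAX (sig m k) := by
  induction k with
  | zero => simp [sig, OnlyAX]
  | succ k ih => simp [sig, unitC, impC, OnlyAX, ih]

lemma onlyAX_exs (k : ℕ) : OnlyAX (exs k) := by
  induction k with
  | zero => simp [exs, OnlyAX]
  | succ k ih => simp [exs, OnlyAX, ih]

lemma onlyAX_phi (m : ℕ) : OnlyAX (phi m) := by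
  simp [phi, OnlyAX, onlyAX_sig, onlyAX_exs]

lemma td_sig (m k : ℕ) : (sig m k).td = 0 := by
  induction k with
  | zero => simp [sig, CTL.td]
  | succ k ih => simp [sig, unitC, impC, CTL.td, ih]

lemma td_exs (k : ℕ) : (exs k).td ≤ 1 := by
  induction k with
  | zero => simp [exs, CTL.td]
  | succ k ih => simp [exs, CTL.td]; omega

lemma td_phi (m : ℕ) : (phi m).td ≤ 1 := by
  have h1 := td_sig m m
  have h2 := td_exs m
  simp [phi, CTL.td, h1]
  omega

lemma len_sig (m k : ℕ) : (sig m k).len = 16 * k + 4 := by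
  induction k with
  | zero => simp [sig, CTL.len]
  | succ k ih => simp [sig, unitC, impC, CTL.len, ih]; omega

lemma len_exs (k : ℕ) : (exs k).len = 3 * k + 1 := by
  induction k with
  | zero => simp [exs, CTL.len]
  | succ k ih => simp [exs, CTL.len, ih]; omega

lemma len_phi (m : ℕ) : (phi m).len = 19 * m + 12 := by
  simp [phi, CTL.len, len_sig, len_exs]; omega

lemma sat_impC {W : Type} (K : Kripke W) (a b : CTL) (w : W) :
    sat K (impC a b) w ↔ (sat K a w → sat K b w) := by
  simp only [impC, sat]; tauto

lemma unit_props {W : Type} (K : Kripke W) (m i : ℕ) (w : W)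
    (h : sat K (unitC m i) w) :
    (K.V i w → K.V (m+1+i) w) ∧ (K.V (m+i) w → K.V (m+1+i) w) ∧
      (K.V i w → ¬ K.V (m+i) w) := by
  simp only [unitC, impC, sat] at h
  tauto

lemma sig_sat_unit {W : Type} (K : Kripke W) (m k : ℕ) (w : W)
    (h : sat K (sig m k) w) : ∀ i, 1 ≤ i → i ≤ k → sat K (unitC m i) w := by
  induction k with
  | zero => intro i h1 h2; omega
  | succ k ih =>
    intro i h1 h2
    rw [sig] at h
    obtain ⟨h, hu⟩ := h
    rcases Nat.lt_or_ge i (k+1) with hi | hi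
    · exact ih h i h1 (by omega)
    · have : i = k + 1 := by omega
      subst this; exact hu

lemma carry {W : Type} (K : Kripke W) (m : ℕ) (w : W)
    (hu : ∀ i, 1 ≤ i → i ≤ m → sat K (unitC m i) w) :
    ∀ i j, 1 ≤ i → i ≤ j → j ≤ m → K.V (m+1+i) w → K.V (m+1+j) w := by
  intro i j h1 hij hjm hv
  induction j with
  | zero => omega
  | succ j ih =>
    rcases Nat.lt_or_ge i (j+1) with hi | hi
    · have hj : K.V (m+1+j) w := ih (by omega) (by omega)
      have h2 := (unit_props K m (j+1) w (hu (j+1) (by omega) hjm)).2.1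
      have : K.V (m+(j+1)) w := by
        rw [show m + (j+1) = m+1+j from by omega]; exact hj
      exact h2 this
    · have : i = j + 1 := by omega
      subst this; exact hv

lemma sig_at_most_one {W : Type} (K : Kripke W) (m : ℕ) (w : W)
    (h : sat K (sig m m) w) {i j : ℕ} (h1 : 1 ≤ i) (hij : i < j) (hjm : j ≤ m)
    (hvi : K.V i w) (hvj : K.V j w) : False := by
  have hu := sig_sat_unit K m m w h
  have hci : K.V (m+1+i) w :=
    (unit_props K m i w (hu i h1 (by omega))).1 hvi
  obtain ⟨j', rfl⟩ : ∃ j', j = j' + 1 := ⟨j - 1, by omega⟩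
  have hc : K.V (m+1+j') w := carry K m w hu i j' h1 (by omega) (by omega) hci
  have h3 := (unit_props K m (j'+1) w (hu (j'+1) (by omega) hjm)).2.2 hvj
  exact h3 (by rw [show m + (j'+1) = m+1+j' from by omega]; exact hc)

lemma exs_sat {W : Type} (K : Kripke W) (k : ℕ) (w : W) (h : sat K (exs k) w) :
    ∀ i, 1 ≤ i → i ≤ k → sat K (.EX (.atom i)) w := by
  induction k with
  | zero => intro i h1 h2; omega
  | succ k ih =>
    intro i h1 h2
    rw [exs] at h
    obtain ⟨h, hu⟩ := h
    rcases Nat.lt_or_ge i (k+1) with hi | hi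
    · exact ih h i h1 (by omega)
    · have : i = k + 1 := by omega
      subst this; exact hu

/-- The witness model: root `0` with successors `1..m`, each with a self-loop. -/
def KM (m : ℕ) : Kripke ℕ where
  R w u := (w = 0 ∧ 1 ≤ u ∧ u ≤ m) ∨ (w ≠ 0 ∧ u = w)
  V p x := (x = 0 ∧ p = 0) ∨ (x ≠ 0 ∧ (p = x ∨ m + 1 + x ≤ p))

lemma KM_R (m w u : ℕ) :
    (KM m).R w u ↔ ((w = 0 ∧ 1 ≤ u ∧ u ≤ m) ∨ (w ≠ 0 ∧ u = w)) := Iff.rfl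

lemma KM_V (m p x : ℕ) :
    (KM m).V p x ↔ ((x = 0 ∧ p = 0) ∨ (x ≠ 0 ∧ (p = x ∨ m + 1 + x ≤ p))) := Iff.rfl

lemma KM_serial (m : ℕ) (hm : 1 ≤ m) : Serial (KM m).R := by
  intro w
  by_cases h : w = 0
  · exact ⟨1, Or.inl ⟨h, le_refl 1, hm⟩⟩
  · exact ⟨w, Or.inr ⟨h, rfl⟩⟩

lemma KM_sat_sig (m : ℕ) : ∀ k, k ≤ m → ∀ x, 1 ≤ x → x ≤ m →
    sat (KM m) (sig m k) x := by
  intro k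
  induction k with
  | zero =>
    intro _ x hx1 hxm
    simp only [sig, sat, KM_V]; omega
  | succ k ih =>
    intro hkm x hx1 hxm
    rw [sig]
    refine ⟨ih (by omega) x hx1 hxm, ?_⟩
    simp only [unitC, impC, sat, KM_V]
    omega

lemma KM_sat_exs (m : ℕ) : ∀ k, k ≤ m → sat (KM m) (exs k) 0 := by
  intro k
  induction k with
  | zero =>
    intro _
    show (KM m).V 0 0
    simp [KM_V]
  | succ k ih =>
    intro hkm
    rw [exs]
    refine ⟨ih (by omega), ?_⟩
    refine ⟨fun n => if n = 0 then 0 else k + 1, ?_, rfl, ?_⟩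
    · intro i
      cases i with
      | zero =>
        show (KM m).R 0 (k + 1)
        exact Or.inl ⟨rfl, by omega, by omega⟩
      | succ i =>
        show (KM m).R (k + 1) (k + 1)
        exact Or.inr ⟨by omega, rfl⟩
    · show (KM m).V (k + 1) (k + 1)
      exact Or.inr ⟨by omega, Or.inl rfl⟩

lemma KM_sat_phi (m : ℕ) (hm : 1 ≤ m) : sat (KM m) (phi m) 0 := by
  rw [phi]
  refine ⟨⟨?_, ?_⟩, KM_sat_exs m m le_rfl⟩
  · show (KM m).V 0 0
    simp [KM_V]
  · intro π hπ h0
    have hr := hπ 0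
    rw [h0] at hr
    rcases hr with ⟨_, h1, h2⟩ | ⟨h, _⟩
    · refine ⟨?_, KM_sat_sig m m le_rfl (π 1) h1 h2⟩
      show ¬ (KM m).V 0 (π (0 + 1))
      simp only [KM_V]; omega
    · exact absurd rfl h

end FlatAX
/-- For each `m ≥ 1` there is a satisfiable flat CTL formula over the operators `{AX}`
(and the dual `EX`) of length `O(m)` all of whose rooted serial models have at least
`m + 1` worlds. -/
theorem flat_AX_linear_model_lower_bound :
    ∃ C : ℕ, 0 < C ∧ ∀ m : ℕ, 1 ≤ m → ∃ φ : CTL,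
      OnlyAX φ ∧ φ.td ≤ 1 ∧ φ.len ≤ C * m ∧
      (∃ (W : Type) (K : Kripke W) (w : W), Serial K.R ∧ sat K φ w) ∧
      (∀ (W : Type) (inst : Fintype W) (K : Kripke W) (w : W),
        Serial K.R → sat K φ w → m + 1 ≤ @Fintype.card W inst) := by
  refine ⟨31, by norm_num, ?_⟩
  intro m hm
  refine ⟨FlatAX.phi m, FlatAX.onlyAX_phi m, FlatAX.td_phi m, ?_, ?_, ?_⟩
  · rw [FlatAX.len_phi]; omega
  · exact ⟨ℕ, FlatAX.KM m, 0, FlatAX.KM_serial m hm, FlatAX.KM_sat_phi m hm⟩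
  · intro W inst K w hser hst
    rw [FlatAX.phi] at hst
    obtain ⟨⟨h0, hAX⟩, hexs⟩ := hst
    have key : ∀ i : ℕ, ∃ v : W, 1 ≤ i → i ≤ m →
        K.V i v ∧ ¬ K.V 0 v ∧ sat K (FlatAX.sig m m) v := by
      intro i
      by_cases h : 1 ≤ i ∧ i ≤ m
      · obtain ⟨π, hπ, hπ0, hπ1⟩ := FlatAX.exs_sat K m w hexs i h.1 h.2
        obtain ⟨hb1, hb2⟩ := hAX π hπ hπ0
        exact ⟨π 1, fun _ _ => ⟨hπ1, hb1, hb2⟩⟩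
      · exact ⟨w, fun h1 h2 => absurd ⟨h1, h2⟩ h⟩
    choose v hv using key
    have h0' : K.V 0 w := h0
    have hvw : ∀ i, 1 ≤ i → i ≤ m → v i ≠ w := by
      intro i h1 h2 he
      exact (hv i h1 h2).2.1 (he ▸ h0')
    have hvv : ∀ i j, 1 ≤ i → i < j → j ≤ m → v i ≠ v j := by
      intro i j h1 h2 h3 he
      exact FlatAX.sig_at_most_one K m (v j) (hv j (by omega) h3).2.2 h1 h2 h3
        (he ▸ (hv i h1 (by omega)).1) (hv j (by omega) h3).1
    set g : Fin (m+1) → W := fun k => if (k : ℕ) < m then v ((k : ℕ) + 1) else w with hg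
    have hinj : Function.Injective g := by
      intro a b hab
      simp only [hg] at hab
      split_ifs at hab with ha hb hb'
      · rcases Nat.lt_trichotomy (a : ℕ) (b : ℕ) with h | h | h
        · exact absurd hab (hvv _ _ (by omega) (by omega) (by omega))
        · exact Fin.ext h
        · exact absurd hab.symm (hvv _ _ (by omega) (by omega) (by omega))
      · exact absurd hab (hvw _ (by omega) (by omega))
      · exact absurd hab.symm (hvw _ (by omega) (by omega))
      · exact Fin.ext (by omega)
    have hcard := @Fintype.card_le_of_injective (Fin (m+1)) W _ inst g hinj
    rw [Fintype.card_fin] at hcard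
    exact hcard
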